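/- arXiv:1603.00294 — 3 statements merged into one kernel-verified Lean document; each statement's English description precedes it below -/
import Mathlib

section
/- (First variational formula for the conjugated ∂̄-operator, Takhtajan–Zograf type.) Let μ̃ : ℍ → ℂ be smooth, and suppose that for every t in a neighborhood of 0 ∈ ℂ there is a smooth diffeomorphism Φ_t : ℍ → ℍ satisfying ∂̄Φ_t = t·μ̃·∂Φ_t with ∂Φ_t(z) ≠ 0 and |t·μ̃(z)| < 1 for all z. Then for every smooth h : ℍ → ℂ and every z ∈ ℍ, the function t ↦ [∂̄(h ∘ Φ_t⁻¹)](Φ_t(z)) · conj(∂Φ_t(z)) equals (1/(1 − |t|²·|μ̃(z)|²)) · (∂̄h(z) − t·μ̃(z)·∂h(z)); in particular its Wirtinger derivative with respect to t at t = 0 equals −μ̃(z)·∂h(z), and its Wirtinger derivative with respect to t̄ at t = 0 equals 0. -/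
open Complex

/-- The open upper half-plane in ℂ. -/
def UHP : Set ℂ := {z : ℂ | 0 < z.im}

/-- The Wirtinger derivative ∂f = (1/2)(∂f/∂x - i·∂f/∂y). -/
noncomputable def wD (f : ℂ → ℂ) (z : ℂ) : ℂ :=
  (1 / 2) * (fderiv ℝ f z 1 - Complex.I * fderiv ℝ f z Complex.I)

/-- The Wirtinger derivative ∂̄f = (1/2)(∂f/∂x + i·∂f/∂y). -/
noncomputable def wDbar (f : ℂ → ℂ) (z : ℂ) : ℂ :=
  (1 / 2) * (fderiv ℝ f z 1 + Complex.I * fderiv ℝ f z Complex.I)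

/-!
Write `g = h ∘ Ψ_t`, so that `h = g ∘ Φ_t` near `z`. The Wirtinger chain rule together with the
Beltrami equation `∂̄Φ_t = ν ∂Φ_t`, `ν = t μ̃(z)`, gives
`∂h = ∂g·∂Φ_t + ∂̄g·conj(ν ∂Φ_t)` and `∂̄h = ∂g·ν ∂Φ_t + ∂̄g·conj(∂Φ_t)`,
hence `∂̄h − ν ∂h = (1 − |ν|²)·∂̄g(Φ_t z)·conj(∂Φ_t z)`. The resulting closed form in `t` differs
from `t ↦ ∂̄h(z) − t μ̃(z) ∂h(z)` by a factor `1 + O(|t|²)`, so its real derivative at `0` is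
multiplication by `−μ̃(z) ∂h(z)`.
-/

open ComplexConjugate Filter Topology

lemma isOpen_UHP : IsOpen UHP :=
  isOpen_lt continuous_const continuous_im

noncomputable def holPart (L : ℂ →L[ℝ] ℂ) : ℂ := (1 / 2) * (L 1 - I * L I)

noncomputable def antiholPart (L : ℂ →L[ℝ] ℂ) : ℂ := (1 / 2) * (L 1 + I * L I)

lemma wD_eq_holPart_fderiv (f : ℂ → ℂ) (z : ℂ) : wD f z = holPart (fderiv ℝ f z) := rfl

lemma wDbar_eq_antiholPart_fderiv (f : ℂ → ℂ) (z : ℂ) :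
    wDbar f z = antiholPart (fderiv ℝ f z) := rfl

lemma holPart_mul_add_antiholPart_mul (L : ℂ →L[ℝ] ℂ) (w : ℂ) :
    holPart L * w + antiholPart L * conj w = L w := by
  obtain ⟨x, y, rfl⟩ : ∃ x y : ℝ, w = x • (1 : ℂ) + y • I :=
    ⟨w.re, w.im, by simp [real_smul, re_add_im]⟩
  rw [L.map_add, L.map_smul, L.map_smul, holPart, antiholPart]
  simp only [real_smul, mul_one, map_add, map_mul, conj_ofReal, conj_I]
  ring_nf
  simp only [I_sq]
  ring

lemma holPart_antiholPart_of_apply_eq {L : ℂ →L[ℝ] ℂ} {a b : ℂ}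
    (hL : ∀ w, L w = a * w + b * conj w) : holPart L = a ∧ antiholPart L = b := by
  have h1 := hL 1
  have hI := hL I
  simp only [map_one, mul_one, conj_I] at h1 hI
  constructor
  · rw [holPart, h1, hI]; ring_nf; simp only [I_sq]; ring
  · rw [antiholPart, h1, hI]; ring_nf; simp only [I_sq]; ring

lemma holPart_comp_antiholPart_comp (L M : ℂ →L[ℝ] ℂ) :
    holPart (L.comp M) = holPart L * holPart M + antiholPart L * conj (antiholPart M) ∧
      antiholPart (L.comp M) = holPart L * antiholPart M + antiholPart L * conj (holPart M) := by
  refine holPart_antiholPart_of_apply_eq fun w => ?_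
  rw [ContinuousLinearMap.comp_apply, ← holPart_mul_add_antiholPart_mul M,
    ← holPart_mul_add_antiholPart_mul L]
  simp only [map_add, map_mul, conj_conj]
  ring

lemma wD_comp_wDbar_comp {g φ : ℂ → ℂ} {z : ℂ}
    (hg : DifferentiableAt ℝ g (φ z)) (hφ : DifferentiableAt ℝ φ z) :
    wD (fun x => g (φ x)) z = wD g (φ z) * wD φ z + wDbar g (φ z) * conj (wDbar φ z) ∧
      wDbar (fun x => g (φ x)) z = wD g (φ z) * wDbar φ z + wDbar g (φ z) * conj (wD φ z) := by
  simp only [wD_eq_holPart_fderiv, wDbar_eq_antiholPart_fderiv]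
  rw [← Function.comp_def, fderiv_comp z hg hφ]
  exact holPart_comp_antiholPart_comp _ _

lemma one_sub_mul_conj_ne_zero {ν : ℂ} (hν : ‖ν‖ ≠ 1) : 1 - ν * conj ν ≠ 0 := by
  rw [mul_conj', sub_ne_zero]
  exact_mod_cast Ne.symm ((pow_eq_one_iff_of_nonneg (norm_nonneg ν) two_ne_zero).not.2 hν)

lemma wDbar_comp_leftInverse_mul_conj_wD {φ ψ h : ℂ → ℂ} {z ν : ℂ}
    (hψφ : ∀ᶠ x in 𝓝 z, ψ (φ x) = x) (hh : DifferentiableAt ℝ h z)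
    (hψ : DifferentiableAt ℝ ψ (φ z)) (hφ : DifferentiableAt ℝ φ z)
    (hBeltrami : wDbar φ z = ν * wD φ z) (hν : ‖ν‖ ≠ 1) :
    wDbar (fun x => h (ψ x)) (φ z) * conj (wD φ z)
      = 1 / (1 - (‖ν‖ : ℂ) ^ 2) * (wDbar h z - ν * wD h z) := by
  have hhψ : DifferentiableAt ℝ (fun x => h (ψ x)) (φ z) := by
    rw [← hψφ.self_of_nhds] at hh
    exact hh.comp (φ z) hψ
  have hfderiv : fderiv ℝ (fun x => h (ψ (φ x))) z = fderiv ℝ h z :=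
    EventuallyEq.fderiv_eq (hψφ.mono fun x hx => congrArg h hx)
  obtain ⟨hwD, hwDbar⟩ := wD_comp_wDbar_comp hhψ hφ
  rw [wD_eq_holPart_fderiv, hfderiv, ← wD_eq_holPart_fderiv] at hwD
  rw [wDbar_eq_antiholPart_fderiv, hfderiv, ← wDbar_eq_antiholPart_fderiv] at hwDbar
  rw [hwDbar, hwD, hBeltrami, map_mul, ← mul_conj', one_div,
    eq_inv_mul_iff_mul_eq₀ (one_sub_mul_conj_ne_zero hν)]
  ring

lemma hasFDerivAt_one_div_one_sub_sq_norm_mul (c a m : ℂ) :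
    HasFDerivAt (fun t : ℂ => 1 / (1 - (‖t‖ : ℂ) ^ 2 * c) * (a - t * m))
      (-(m • ContinuousLinearMap.id ℝ ℂ)) 0 := by
  have hsq : HasFDerivAt (fun t : ℂ => (‖t‖ : ℂ) ^ 2) (0 : ℂ →L[ℝ] ℂ) 0 := by
    simp only [← mul_conj']
    simpa using (hasFDerivAt_id (𝕜 := ℝ) (0 : ℂ)).fun_mul
      conjCLE.toContinuousLinearMap.hasFDerivAt
  have hden : HasFDerivAt (fun t : ℂ => 1 - (‖t‖ : ℂ) ^ 2 * c) (0 : ℂ →L[ℝ] ℂ) 0 := by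
    simpa using (hsq.mul_const c).const_sub 1
  have hinv : HasFDerivAt (fun t : ℂ => 1 / (1 - (‖t‖ : ℂ) ^ 2 * c)) (0 : ℂ →L[ℝ] ℂ) 0 := by
    simpa [Function.comp_def] using
      (hasFDerivAt_inv' (𝕜 := ℝ) (by simp : (1 - (‖(0 : ℂ)‖ : ℂ) ^ 2 * c) ≠ 0)).comp 0 hden
  simpa using hinv.fun_mul (((hasFDerivAt_id (0 : ℂ)).mul_const m).const_sub a)

theorem first_variation_conjugated_dbar_general
    (μt : ℂ → ℂ)
    (U : Set ℂ) (hU : U ∈ nhds (0 : ℂ))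
    (Φ Ψ : ℂ → ℂ → ℂ)
    (hΦ_smooth : ∀ t ∈ U, ContDiffOn ℝ (⊤ : ℕ∞) (Φ t) UHP)
    (hΨ_smooth : ∀ t ∈ U, ContDiffOn ℝ (⊤ : ℕ∞) (Ψ t) UHP)
    (hΦ_maps : ∀ t ∈ U, Set.MapsTo (Φ t) UHP UHP)
    (hleft : ∀ t ∈ U, ∀ z ∈ UHP, Ψ t (Φ t z) = z)
    (hBeltrami : ∀ t ∈ U, ∀ z ∈ UHP, wDbar (Φ t) z = t * μt z * wD (Φ t) z)
    (hlt : ∀ t ∈ U, ∀ z ∈ UHP, ‖t * μt z‖ < 1)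
    (h : ℂ → ℂ) (hh_smooth : ContDiffOn ℝ (⊤ : ℕ∞) h UHP) :
    (∀ t ∈ U, ∀ z ∈ UHP,
        wDbar (fun x => h (Ψ t x)) (Φ t z) * (starRingEnd ℂ) (wD (Φ t) z)
          = (1 / (1 - (‖t‖ : ℂ) ^ 2 * (‖μt z‖ : ℂ) ^ 2))
              * (wDbar h z - t * μt z * wD h z))
    ∧ (∀ z ∈ UHP,
        wD (fun t => wDbar (fun x => h (Ψ t x)) (Φ t z)
              * (starRingEnd ℂ) (wD (Φ t) z)) 0
          = -(μt z) * wD h z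
        ∧ wDbar (fun t => wDbar (fun x => h (Ψ t x)) (Φ t z)
              * (starRingEnd ℂ) (wD (Φ t) z)) 0
          = 0) := by
  have hdiff {f : ℂ → ℂ} (hf : ContDiffOn ℝ (⊤ : ℕ∞) f UHP) {x : ℂ} (hx : x ∈ UHP) :
      DifferentiableAt ℝ f x :=
    (hf.differentiableOn (by simp)).differentiableAt (isOpen_UHP.mem_nhds hx)
  have formula : ∀ t ∈ U, ∀ z ∈ UHP,
      wDbar (fun x => h (Ψ t x)) (Φ t z) * conj (wD (Φ t) z)
        = 1 / (1 - (‖t‖ : ℂ) ^ 2 * (‖μt z‖ : ℂ) ^ 2) * (wDbar h z - t * μt z * wD h z) := by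
    intro t ht z hz
    have := wDbar_comp_leftInverse_mul_conj_wD
      (eventually_of_mem (isOpen_UHP.mem_nhds hz) (hleft t ht)) (hdiff hh_smooth hz)
      (hdiff (hΨ_smooth t ht) (hΦ_maps t ht hz)) (hdiff (hΦ_smooth t ht) hz)
      (hBeltrami t ht z hz) (hlt t ht z hz).ne
    rwa [norm_mul, ofReal_mul, mul_pow] at this
  refine ⟨formula, fun z hz => ?_⟩
  have hF : HasFDerivAt (fun t => wDbar (fun x => h (Ψ t x)) (Φ t z) * conj (wD (Φ t) z))
      (-((μt z * wD h z) • ContinuousLinearMap.id ℝ ℂ)) 0 := by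
    refine (hasFDerivAt_one_div_one_sub_sq_norm_mul (‖μt z‖ ^ 2) (wDbar h z) _
      |>.congr_of_eventuallyEq ?_)
    filter_upwards [hU] with t ht
    rw [formula t ht z hz, mul_assoc t]
  rw [wD_eq_holPart_fderiv, wDbar_eq_antiholPart_fderiv, hF.fderiv]
  exact holPart_antiholPart_of_apply_eq fun w => by simp

/-- Takhtajan–Zograf type first variational formula for the conjugated
`∂̄`-operator: for a family `Φ_t` of diffeomorphic solutions of `∂̄Φ_t = t·μ̃·∂Φ_t`
(with inverses `Ψ_t`), the function
`t ↦ [∂̄(h ∘ Ψ_t)](Φ_t z) · conj(∂Φ_t z)` equals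
`(1/(1-|t|²|μ̃ z|²)) · (∂̄h z − t·μ̃ z·∂h z)` on the parameter neighbourhood `U`,
and its Wirtinger `t`- and `t̄`-derivatives at `t = 0` are `−μ̃ z · ∂h z` and `0`. -/
theorem first_variation_conjugated_dbar
    (μt : ℂ → ℂ)
    (hμt_smooth : ContDiffOn ℝ (⊤ : ℕ∞) μt UHP)
    (U : Set ℂ) (hU : U ∈ nhds (0 : ℂ))
    (Φ Ψ : ℂ → ℂ → ℂ)
    (hΦ_smooth : ∀ t ∈ U, ContDiffOn ℝ (⊤ : ℕ∞) (Φ t) UHP)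
    (hΨ_smooth : ∀ t ∈ U, ContDiffOn ℝ (⊤ : ℕ∞) (Ψ t) UHP)
    (hΦ_maps : ∀ t ∈ U, Set.MapsTo (Φ t) UHP UHP)
    (hΨ_maps : ∀ t ∈ U, Set.MapsTo (Ψ t) UHP UHP)
    (hleft : ∀ t ∈ U, ∀ z ∈ UHP, Ψ t (Φ t z) = z)
    (hright : ∀ t ∈ U, ∀ w ∈ UHP, Φ t (Ψ t w) = w)
    (hBeltrami : ∀ t ∈ U, ∀ z ∈ UHP, wDbar (Φ t) z = t * μt z * wD (Φ t) z)
    (hne : ∀ t ∈ U, ∀ z ∈ UHP, wD (Φ t) z ≠ 0)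
    (hlt : ∀ t ∈ U, ∀ z ∈ UHP, ‖t * μt z‖ < 1)
    (h : ℂ → ℂ) (hh_smooth : ContDiffOn ℝ (⊤ : ℕ∞) h UHP) :
    (∀ t ∈ U, ∀ z ∈ UHP,
        wDbar (fun x => h (Ψ t x)) (Φ t z) * (starRingEnd ℂ) (wD (Φ t) z)
          = (1 / (1 - (‖t‖ : ℂ) ^ 2 * (‖μt z‖ : ℂ) ^ 2))
              * (wDbar h z - t * μt z * wD h z))
    ∧ (∀ z ∈ UHP,
        wD (fun t => wDbar (fun x => h (Ψ t x)) (Φ t z)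
              * (starRingEnd ℂ) (wD (Φ t) z)) 0
          = -(μt z) * wD h z
        ∧ wDbar (fun t => wDbar (fun x => h (Ψ t x)) (Φ t z)
              * (starRingEnd ℂ) (wD (Φ t) z)) 0
          = 0) :=
  first_variation_conjugated_dbar_general μt U hU Φ Ψ hΦ_smooth hΨ_smooth hΦ_maps hleft hBeltrami
    hlt h hh_smooth
end

section
/- Let λ : ℍ → ℂ be a Beltrami coefficient and let Φ : ℍ → ℍ be a smooth diffeomorphism satisfying ∂̄Φ = λ·∂Φ with ∂Φ(z) ≠ 0 for all z. Let α : ℍ → ℂ be smooth, and let β : ℍ → ℂ denote the function w ↦ α(Φ⁻¹(w)) / conj(∂Φ(Φ⁻¹(w))). Then for every z ∈ ℍ one has [∂β](Φ(z)) · ∂Φ(z) · conj(∂Φ(z)) = (1/(1 − |λ(z)|²)) · (∂α(z) − ∂̄(conj(λ)·α)(z)). (This is the closed form of the conjugated operator (Φ)_* ∂ (Φ)_*⁻¹ on coefficients of (0,1)-forms used in the paper.) -/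
open Complex

/-!
Write `a = ∂Ψ(Φ z)`, `b = ∂̄Ψ(Φ z)`, `p = ∂Φ z`. The chain rule applied to `Ψ ∘ Φ = id` is a
linear system for `a, b` whose determinant is the Jacobian `|∂Φ|² - |∂̄Φ|²`; with the Beltrami
equation `∂̄Φ = λ ∂Φ` it gives `a p (1 - |λ|²) = 1` and `b = -λ ā`. Differentiating
`β = (α ∘ Ψ) / conj (∂Φ ∘ Ψ)`, the second derivatives of `Φ` only enter through
`∂̄(∂Φ ∘ Ψ) = ∂∂Φ · b + ∂̄∂Φ · ā`. Since `∂̄∂Φ = ∂∂̄Φ = ∂(λ ∂Φ)`, the `∂∂Φ` terms cancel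
against `b = -λ ā`, leaving `∂λ · p · ā`, and the closed form follows by algebra.
-/

open Filter Topology ComplexConjugate

theorem ContDiffAt.differentiableAt_fderiv {𝕜 E F : Type*} [NontriviallyNormedField 𝕜]
    [NormedAddCommGroup E] [NormedSpace 𝕜 E] [NormedAddCommGroup F] [NormedSpace 𝕜 F]
    {f : E → F} {x : E} (hf : ContDiffAt 𝕜 2 f x) : DifferentiableAt 𝕜 (fderiv 𝕜 f) x :=
  (hf.fderiv_right (m := 1) le_rfl).differentiableAt one_ne_zero

section Wirtinger

variable {f g : ℂ → ℂ} {z : ℂ}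

theorem fderiv_apply_eq_wD_mul_add_wDbar_mul_conj (f : ℂ → ℂ) (z v : ℂ) :
    fderiv ℝ f z v = wD f z * v + wDbar f z * conj v := by
  have hv : v = v.re • (1 : ℂ) + v.im • I := by simp [Complex.real_smul, re_add_im]
  rw [hv, map_add, map_smul, map_smul]
  simp only [wD, wDbar, Complex.real_smul, map_add, map_mul, conj_ofReal, map_one, conj_I]
  linear_combination (fderiv ℝ f z I * (v.im : ℂ)) * I_mul_I

theorem wD_eq_of_fderiv_apply {A B : ℂ} (h : ∀ v, fderiv ℝ f z v = A * v + B * conj v) :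
    wD f z = A := by
  simp only [wD, h, map_one, conj_I]
  linear_combination (-(1 : ℂ) / 2 * (A - B)) * I_mul_I

theorem wDbar_eq_of_fderiv_apply {A B : ℂ} (h : ∀ v, fderiv ℝ f z v = A * v + B * conj v) :
    wDbar f z = B := by
  simp only [wDbar, h, map_one, conj_I]
  linear_combination ((1 : ℂ) / 2 * (A - B)) * I_mul_I

theorem fderiv_comp_apply_wirtinger (hf : DifferentiableAt ℝ f (g z))
    (hg : DifferentiableAt ℝ g z) (v : ℂ) :
    fderiv ℝ (fun w => f (g w)) z v
      = (wD f (g z) * wD g z + wDbar f (g z) * conj (wDbar g z)) * v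
        + (wD f (g z) * wDbar g z + wDbar f (g z) * conj (wD g z)) * conj v := by
  rw [show (fun w => f (g w)) = f ∘ g from rfl, fderiv_comp z hf hg,
    ContinuousLinearMap.comp_apply, fderiv_apply_eq_wD_mul_add_wDbar_mul_conj f,
    fderiv_apply_eq_wD_mul_add_wDbar_mul_conj g]
  simp only [map_add, map_mul, conj_conj]
  ring

theorem wD_comp (hf : DifferentiableAt ℝ f (g z)) (hg : DifferentiableAt ℝ g z) :
    wD (fun w => f (g w)) z = wD f (g z) * wD g z + wDbar f (g z) * conj (wDbar g z) :=
  wD_eq_of_fderiv_apply (fderiv_comp_apply_wirtinger hf hg)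

theorem wDbar_comp (hf : DifferentiableAt ℝ f (g z)) (hg : DifferentiableAt ℝ g z) :
    wDbar (fun w => f (g w)) z = wD f (g z) * wDbar g z + wDbar f (g z) * conj (wD g z) :=
  wDbar_eq_of_fderiv_apply (fderiv_comp_apply_wirtinger hf hg)

theorem fderiv_mul_apply_wirtinger (hf : DifferentiableAt ℝ f z) (hg : DifferentiableAt ℝ g z)
    (v : ℂ) :
    fderiv ℝ (fun w => f w * g w) z v
      = (wD f z * g z + f z * wD g z) * v + (wDbar f z * g z + f z * wDbar g z) * conj v := by
  rw [fderiv_fun_mul hf hg]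
  simp only [add_apply, smul_apply, smul_eq_mul,
    fderiv_apply_eq_wD_mul_add_wDbar_mul_conj f, fderiv_apply_eq_wD_mul_add_wDbar_mul_conj g]
  ring

theorem fderiv_inv_apply_wirtinger (hf : DifferentiableAt ℝ f z) (h0 : f z ≠ 0) (v : ℂ) :
    fderiv ℝ (fun w => (f w)⁻¹) z v
      = -(wD f z / f z ^ 2) * v + -(wDbar f z / f z ^ 2) * conj v := by
  rw [show (fun w => (f w)⁻¹) = Inv.inv ∘ f from rfl,
    ((hasFDerivAt_inv' (𝕜 := ℝ) h0).comp z hf.hasFDerivAt).fderiv]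
  simp only [ContinuousLinearMap.comp_apply, neg_apply,
    ContinuousLinearMap.mulLeftRight_apply, fderiv_apply_eq_wD_mul_add_wDbar_mul_conj f]
  field_simp
  ring

theorem fderiv_conj_apply_wirtinger (hf : DifferentiableAt ℝ f z) (v : ℂ) :
    fderiv ℝ (fun w => conj (f w)) z v = conj (wDbar f z) * v + conj (wD f z) * conj v := by
  rw [show (fun w => conj (f w)) = conjCLE ∘ f from rfl,
    fderiv_comp z conjCLE.differentiableAt hf, conjCLE.fderiv]
  simp only [ContinuousLinearMap.comp_apply, ContinuousLinearEquiv.coe_coe, conjCLE_apply,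
    fderiv_apply_eq_wD_mul_add_wDbar_mul_conj f, map_add, map_mul, conj_conj]
  ring

theorem wD_id : wD (fun w => w) z = 1 :=
  wD_eq_of_fderiv_apply (B := 0) fun v => by simp

theorem wDbar_id : wDbar (fun w => w) z = 0 :=
  wDbar_eq_of_fderiv_apply (A := 1) fun v => by simp

theorem Filter.EventuallyEq.wD_eq (h : f =ᶠ[𝓝 z] g) : wD f z = wD g z := by
  simp only [wD, h.fderiv_eq]

theorem Filter.EventuallyEq.wDbar_eq (h : f =ᶠ[𝓝 z] g) : wDbar f z = wDbar g z := by
  simp only [wDbar, h.fderiv_eq]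

theorem DifferentiableAt.wD (hf : DifferentiableAt ℝ (fderiv ℝ f) z) :
    DifferentiableAt ℝ (wD f) z :=
  ((hf.clm_apply (differentiableAt_const 1)).sub
    ((hf.clm_apply (differentiableAt_const I)).const_mul I)).const_mul (1 / 2 : ℂ)

theorem wD_mul (hf : DifferentiableAt ℝ f z) (hg : DifferentiableAt ℝ g z) :
    wD (fun w => f w * g w) z = wD f z * g z + f z * wD g z :=
  wD_eq_of_fderiv_apply (fderiv_mul_apply_wirtinger hf hg)

theorem wDbar_mul (hf : DifferentiableAt ℝ f z) (hg : DifferentiableAt ℝ g z) :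
    wDbar (fun w => f w * g w) z = wDbar f z * g z + f z * wDbar g z :=
  wDbar_eq_of_fderiv_apply (fderiv_mul_apply_wirtinger hf hg)

theorem wD_conj (hf : DifferentiableAt ℝ f z) :
    wD (fun w => conj (f w)) z = conj (wDbar f z) :=
  wD_eq_of_fderiv_apply (fderiv_conj_apply_wirtinger hf)

theorem wDbar_conj (hf : DifferentiableAt ℝ f z) :
    wDbar (fun w => conj (f w)) z = conj (wD f z) :=
  wDbar_eq_of_fderiv_apply (fderiv_conj_apply_wirtinger hf)

theorem wD_div (hf : DifferentiableAt ℝ f z) (hg : DifferentiableAt ℝ g z) (h0 : g z ≠ 0) :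
    wD (fun w => f w / g w) z = (wD f z * g z - f z * wD g z) / g z ^ 2 := by
  have hginv : DifferentiableAt ℝ (fun w => (g w)⁻¹) z :=
    ((hasFDerivAt_inv' (𝕜 := ℝ) h0).differentiableAt).comp z hg
  simp only [div_eq_mul_inv (f _)]
  rw [wD_mul hf hginv, wD_eq_of_fderiv_apply (fderiv_inv_apply_wirtinger hg h0)]
  field_simp
  ring

theorem fderiv_wD_apply (hf : DifferentiableAt ℝ (fderiv ℝ f) z) (u : ℂ) :
    fderiv ℝ (wD f) z u
      = 1 / 2 * (fderiv ℝ (fderiv ℝ f) z u 1 - I * fderiv ℝ (fderiv ℝ f) z u I) := by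
  have h1 := hf.hasFDerivAt.clm_apply (hasFDerivAt_const (1 : ℂ) z)
  have hI := hf.hasFDerivAt.clm_apply (hasFDerivAt_const I z)
  rw [HasFDerivAt.fderiv (f := wD f) ((h1.sub (hI.const_mul I)).const_mul (1 / 2 : ℂ))]
  simp

theorem fderiv_wDbar_apply (hf : DifferentiableAt ℝ (fderiv ℝ f) z) (u : ℂ) :
    fderiv ℝ (wDbar f) z u
      = 1 / 2 * (fderiv ℝ (fderiv ℝ f) z u 1 + I * fderiv ℝ (fderiv ℝ f) z u I) := by
  have h1 := hf.hasFDerivAt.clm_apply (hasFDerivAt_const (1 : ℂ) z)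
  have hI := hf.hasFDerivAt.clm_apply (hasFDerivAt_const I z)
  rw [HasFDerivAt.fderiv (f := wDbar f) ((h1.add (hI.const_mul I)).const_mul (1 / 2 : ℂ))]
  simp [mul_add]

theorem ContDiffAt.wD_wDbar_comm (hf : ContDiffAt ℝ 2 f z) :
    wD (wDbar f) z = wDbar (wD f) z := by
  have hD := hf.differentiableAt_fderiv
  have hsymm := hf.isSymmSndFDerivAt (by simp [minSmoothness_of_isRCLikeNormedField])
  simp only [wD, wDbar, fderiv_wD_apply hD, fderiv_wDbar_apply hD, hsymm 1 I]
  ring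

end Wirtinger

section LeftInverse

variable {lam Φ Ψ : ℂ → ℂ} {z : ℂ}

theorem wD_leftInverse_mul_jacobian (hΨ : DifferentiableAt ℝ Ψ (Φ z))
    (hΦ : DifferentiableAt ℝ Φ z) (hinv : ∀ᶠ w in 𝓝 z, Ψ (Φ w) = w) :
    wD Ψ (Φ z) * ((‖wD Φ z‖ : ℂ) ^ 2 - (‖wDbar Φ z‖ : ℂ) ^ 2) = conj (wD Φ z) ∧
      wDbar Ψ (Φ z) * ((‖wD Φ z‖ : ℂ) ^ 2 - (‖wDbar Φ z‖ : ℂ) ^ 2) = -wDbar Φ z := by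
  have hD : wD Ψ (Φ z) * wD Φ z + wDbar Ψ (Φ z) * conj (wDbar Φ z) = 1 := by
    rw [← wD_comp hΨ hΦ, Filter.EventuallyEq.wD_eq (g := fun w => w) hinv, wD_id]
  have hDbar : wD Ψ (Φ z) * wDbar Φ z + wDbar Ψ (Φ z) * conj (wD Φ z) = 0 := by
    rw [← wDbar_comp hΨ hΦ, Filter.EventuallyEq.wDbar_eq (g := fun w => w) hinv, wDbar_id]
  simp only [← mul_conj']
  constructor
  · linear_combination conj (wD Φ z) * hD - conj (wDbar Φ z) * hDbar
  · linear_combination wD Φ z * hDbar - wDbar Φ z * hD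

theorem wD_leftInverse_of_beltrami (hΨ : DifferentiableAt ℝ Ψ (Φ z))
    (hΦ : DifferentiableAt ℝ Φ z) (hinv : ∀ᶠ w in 𝓝 z, Ψ (Φ w) = w)
    (hBel : wDbar Φ z = lam z * wD Φ z) (hp : wD Φ z ≠ 0) (hlam : ‖lam z‖ ≠ 1) :
    wD Ψ (Φ z) * wD Φ z * (1 - (‖lam z‖ : ℂ) ^ 2) = 1 ∧
      wDbar Ψ (Φ z) = -lam z * conj (wD Ψ (Φ z)) := by
  obtain ⟨ha, hb⟩ := wD_leftInverse_mul_jacobian hΨ hΦ hinv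
  have hc : (1 - (‖lam z‖ : ℂ) ^ 2) ≠ 0 := by
    exact_mod_cast sub_ne_zero.2 fun h =>
      hlam ((pow_eq_one_iff_of_nonneg (norm_nonneg _) two_ne_zero).1 h.symm)
  have hJ : (‖wD Φ z‖ : ℂ) ^ 2 - (‖wDbar Φ z‖ : ℂ) ^ 2
      = wD Φ z * conj (wD Φ z) * (1 - (‖lam z‖ : ℂ) ^ 2) := by
    rw [hBel, norm_mul, mul_conj']
    push_cast
    ring
  rw [hJ] at ha hb
  have hpc : conj (wD Φ z) ≠ 0 := by simpa using hp
  have ha' : conj (wD Ψ (Φ z)) * (wD Φ z * conj (wD Φ z) * (1 - (‖lam z‖ : ℂ) ^ 2))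
      = wD Φ z := by
    have h := congrArg conj ha
    simp only [map_mul, map_sub, map_one, map_pow, conj_ofReal, conj_conj] at h
    linear_combination h
  constructor
  · apply mul_right_cancel₀ hpc
    linear_combination ha
  · apply mul_right_cancel₀ (mul_ne_zero (mul_ne_zero hp hpc) hc)
    linear_combination hb + lam z * ha' - hBel

theorem wDbar_wD_comp_leftInverse (hΦ : ContDiffAt ℝ 2 Φ z) (hΨ : DifferentiableAt ℝ Ψ (Φ z))
    (hlam : DifferentiableAt ℝ lam z) (hinv : ∀ᶠ w in 𝓝 z, Ψ (Φ w) = w)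
    (hBel : wDbar Φ =ᶠ[𝓝 z] fun w => lam w * wD Φ w)
    (hb : wDbar Ψ (Φ z) = -lam z * conj (wD Ψ (Φ z))) :
    wDbar (fun w => wD Φ (Ψ w)) (Φ z) = wD lam z * wD Φ z * conj (wD Ψ (Φ z)) := by
  have hz : Ψ (Φ z) = z := hinv.self_of_nhds
  have hD2 := hΦ.differentiableAt_fderiv
  have hDΦ : DifferentiableAt ℝ (wD Φ) (Ψ (Φ z)) := by rw [hz]; exact hD2.wD
  have hcomm : wDbar (wD Φ) z = wD lam z * wD Φ z + lam z * wD (wD Φ) z := by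
    rw [← hΦ.wD_wDbar_comm, hBel.wD_eq, wD_mul hlam hD2.wD]
  rw [wDbar_comp hDΦ hΨ, hz, hcomm, hb]
  ring

theorem wD_div_conj_wD_comp_leftInverse {α : ℂ → ℂ} (hΦ : ContDiffAt ℝ 2 Φ z)
    (hΨ : DifferentiableAt ℝ Ψ (Φ z)) (hlam : DifferentiableAt ℝ lam z)
    (hα : DifferentiableAt ℝ α z) (hinv : ∀ᶠ w in 𝓝 z, Ψ (Φ w) = w)
    (hBel : wDbar Φ =ᶠ[𝓝 z] fun w => lam w * wD Φ w) (hp : wD Φ z ≠ 0) (hlam1 : ‖lam z‖ ≠ 1) :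
    wD (fun w => α (Ψ w) / conj (wD Φ (Ψ w))) (Φ z) * wD Φ z * conj (wD Φ z)
      = 1 / (1 - (‖lam z‖ : ℂ) ^ 2) * (wD α z - wDbar (fun x => conj (lam x) * α x) z) := by
  have hz : Ψ (Φ z) = z := hinv.self_of_nhds
  have hD2 := hΦ.differentiableAt_fderiv
  obtain ⟨ha, hb⟩ :=
    wD_leftInverse_of_beltrami hΨ (hΦ.differentiableAt two_ne_zero) hinv hBel.self_of_nhds hp
      hlam1
  have hαz : DifferentiableAt ℝ α (Ψ (Φ z)) := by rwa [hz]
  have hDΦz : DifferentiableAt ℝ (wD Φ) (Ψ (Φ z)) := by rw [hz]; exact hD2.wD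
  have hαΨ : DifferentiableAt ℝ (fun w => α (Ψ w)) (Φ z) := hαz.comp (Φ z) hΨ
  have hg : DifferentiableAt ℝ (fun w => wD Φ (Ψ w)) (Φ z) := hDΦz.comp (Φ z) hΨ
  have hconj_g : DifferentiableAt ℝ (fun w => conj (wD Φ (Ψ w))) (Φ z) := hg.star
  have hconj_lam : DifferentiableAt ℝ (fun w => conj (lam w)) z := hlam.star
  have hD_αΨ : wD (fun w => α (Ψ w)) (Φ z)
      = wD Ψ (Φ z) * (wD α z - conj (lam z) * wDbar α z) := by
    rw [wD_comp hαz hΨ, hz, hb]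
    simp only [map_mul, map_neg, conj_conj]
    ring
  have hD_conj_g : wD (fun w => conj (wD Φ (Ψ w))) (Φ z)
      = conj (wD lam z) * conj (wD Φ z) * wD Ψ (Φ z) := by
    rw [wD_conj hg, wDbar_wD_comp_leftInverse hΦ hΨ hlam hinv hBel hb]
    simp only [map_mul, conj_conj]
  have hpc : conj (wD Φ z) ≠ 0 := by simpa using hp
  have hc : (1 - (‖lam z‖ : ℂ) ^ 2) ≠ 0 := by
    rintro h
    simp [h] at ha
  rw [wD_div hαΨ hconj_g (by rwa [hz]), hD_αΨ, hD_conj_g, wDbar_mul hconj_lam hα,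
    wDbar_conj hlam, hz]
  field_simp
  linear_combination (wD α z - conj (lam z) * wDbar α z - α z * conj (wD lam z)) * ha

end LeftInverse

theorem conjugated_d_on_forms_closed_form_general
    (lam Φ Ψ : ℂ → ℂ)
    (hlam_smooth : ContDiffOn ℝ (⊤ : ℕ∞) lam UHP)
    (hlam_lt : ∀ z ∈ UHP, ‖lam z‖ < 1)
    (hΦ_smooth : ContDiffOn ℝ (⊤ : ℕ∞) Φ UHP)
    (hΨ_smooth : ContDiffOn ℝ (⊤ : ℕ∞) Ψ UHP)
    (hΦ_maps : Set.MapsTo Φ UHP UHP)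
    (hleft : ∀ z ∈ UHP, Ψ (Φ z) = z)
    (hBeltrami : ∀ z ∈ UHP, wDbar Φ z = lam z * wD Φ z)
    (hne : ∀ z ∈ UHP, wD Φ z ≠ 0)
    (α : ℂ → ℂ) (hα_smooth : ContDiffOn ℝ (⊤ : ℕ∞) α UHP) :
    ∀ z ∈ UHP,
      wD (fun w => α (Ψ w) / (starRingEnd ℂ) (wD Φ (Ψ w))) (Φ z)
          * wD Φ z * (starRingEnd ℂ) (wD Φ z)
        = (1 / (1 - (‖lam z‖ : ℂ) ^ 2))
            * (wD α z - wDbar (fun x => (starRingEnd ℂ) (lam x) * α x) z) := by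
  intro z hz
  have hU : IsOpen UHP := isOpen_lt continuous_const continuous_im
  have smoothAt : ∀ {f : ℂ → ℂ} {x : ℂ}, ContDiffOn ℝ (⊤ : ℕ∞) f UHP → x ∈ UHP →
      ContDiffAt ℝ 2 f x := fun hf hx =>
    (hf.contDiffAt (hU.mem_nhds hx)).of_le (WithTop.coe_le_coe.mpr le_top)
  have diffAt : ∀ {f : ℂ → ℂ} {x : ℂ}, ContDiffOn ℝ (⊤ : ℕ∞) f UHP → x ∈ UHP →
      DifferentiableAt ℝ f x := fun hf hx => (smoothAt hf hx).differentiableAt two_ne_zero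
  exact wD_div_conj_wD_comp_leftInverse (smoothAt hΦ_smooth hz)
    (diffAt hΨ_smooth (hΦ_maps hz)) (diffAt hlam_smooth hz) (diffAt hα_smooth hz)
    (eventually_of_mem (hU.mem_nhds hz) hleft) (eventually_of_mem (hU.mem_nhds hz) hBeltrami)
    (hne z hz) (hlam_lt z hz).ne

/-- closed form of the conjugated operator `(Φ)_* ∂ (Φ)_*⁻¹` on
coefficients of `(0,1)`-forms: with `β(w) = α(Ψ w) / conj(∂Φ(Ψ w))` one has
`[∂β](Φ z) · ∂Φ z · conj(∂Φ z) = (1/(1-|λ z|²)) · (∂α z − ∂̄(conj(λ)·α) z)`. -/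
theorem conjugated_d_on_forms_closed_form
    (lam Φ Ψ : ℂ → ℂ)
    (hlam_smooth : ContDiffOn ℝ (⊤ : ℕ∞) lam UHP)
    (hlam_lt : ∀ z ∈ UHP, ‖lam z‖ < 1)
    (hΦ_smooth : ContDiffOn ℝ (⊤ : ℕ∞) Φ UHP)
    (hΨ_smooth : ContDiffOn ℝ (⊤ : ℕ∞) Ψ UHP)
    (hΦ_maps : Set.MapsTo Φ UHP UHP)
    (hΨ_maps : Set.MapsTo Ψ UHP UHP)
    (hleft : ∀ z ∈ UHP, Ψ (Φ z) = z)
    (hright : ∀ w ∈ UHP, Φ (Ψ w) = w)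
    (hBeltrami : ∀ z ∈ UHP, wDbar Φ z = lam z * wD Φ z)
    (hne : ∀ z ∈ UHP, wD Φ z ≠ 0)
    (α : ℂ → ℂ) (hα_smooth : ContDiffOn ℝ (⊤ : ℕ∞) α UHP) :
    ∀ z ∈ UHP,
      wD (fun w => α (Ψ w) / (starRingEnd ℂ) (wD Φ (Ψ w))) (Φ z)
          * wD Φ z * (starRingEnd ℂ) (wD Φ z)
        = (1 / (1 - (‖lam z‖ : ℂ) ^ 2))
            * (wD α z - wDbar (fun x => (starRingEnd ℂ) (lam x) * α x) z) :=
  conjugated_d_on_forms_closed_form_general lam Φ Ψ hlam_smooth hlam_lt hΦ_smooth hΨ_smooth hΦ_maps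
    hleft hBeltrami hne α hα_smooth
end

section
/- (Kodaira–Spencer coboundary identity from Lemma 3.1.) Let Υ : D × ℍ → GL(n,ℂ) be a smooth map, where D is an open neighborhood of 0 in ℝ. Then for every z ∈ ℍ one has ∂̄_z[(∂_t Υ)(0,z) · Υ(0,z)⁻¹] = Υ(0,z) · [∂_t|_{t=0} (Υ(t,z)⁻¹ · ∂̄_z Υ(t,z))] · Υ(0,z)⁻¹, where ∂̄_z denotes the Wirtinger z̄-derivative in the ℍ-variable (entrywise) and ∂_t the derivative in the parameter t. -/
open Complex

/-- Entrywise Wirtinger derivative ∂ of a matrix-valued function. -/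
noncomputable def mwD (n : ℕ) (f : ℂ → Matrix (Fin n) (Fin n) ℂ) (z : ℂ) :
    Matrix (Fin n) (Fin n) ℂ :=
  Matrix.of fun i j => wD (fun w => f w i j) z

/-- Entrywise Wirtinger derivative ∂̄ of a matrix-valued function. -/
noncomputable def mwDbar (n : ℕ) (f : ℂ → Matrix (Fin n) (Fin n) ℂ) (z : ℂ) :
    Matrix (Fin n) (Fin n) ℂ :=
  Matrix.of fun i j => wDbar (fun w => f w i j) z

/-- Entrywise smoothness (C^∞ over ℝ) of a matrix-valued function on a set. -/
def MSmoothOn (n : ℕ) (f : ℂ → Matrix (Fin n) (Fin n) ℂ) (s : Set ℂ) : Prop :=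
  ∀ i j, ContDiffOn ℝ (⊤ : ℕ∞) (fun z => f z i j) s

/-- Entrywise derivative at `t = 0` of a one-parameter family of matrices. -/
noncomputable def mderiv0 (n : ℕ) (f : ℝ → Matrix (Fin n) (Fin n) ℂ) :
    Matrix (Fin n) (Fin n) ℂ :=
  Matrix.of fun i j => deriv (fun t => f t i j) 0

/-- Joint entrywise smoothness (C^∞ over ℝ) of a one-parameter family of
matrix-valued functions on `D × s`. -/
def MSmoothOn2 (n : ℕ) (f : ℝ → ℂ → Matrix (Fin n) (Fin n) ℂ)
    (D : Set ℝ) (s : Set ℂ) : Prop :=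
  ∀ i j, ContDiffOn ℝ (⊤ : ℕ∞) (fun p : ℝ × ℂ => f p.1 p.2 i j) (D ×ˢ s)

/-!
Regard `Υ` as a map `G` on `ℝ × ℂ` with values in the Banach algebra of matrices. For any two
directions `u, v`, the product rule and `D(G⁻¹) = -G⁻¹ (DG) G⁻¹` expand both
`D_v((D_u G) G⁻¹)` and `G · D_u(G⁻¹ (D_v G)) · G⁻¹` into
`D²G(v, u) G⁻¹ - (D_u G) G⁻¹ (D_v G) G⁻¹`, up to swapping the arguments of the second
derivative, which is symmetric. Taking `u = ∂_t` and `v` the two real directions of `ℂ`, and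
combining them into `∂̄ = ½(∂_x + i ∂_y)`, gives the identity.
-/

section SecondDerivative

variable {𝕜 E F : Type*} [RCLike 𝕜] [NormedAddCommGroup E] [NormedSpace 𝕜 E]
  [NormedAddCommGroup F] [NormedSpace 𝕜 F] {G : E → F} {x : E}

theorem ContDiffAt.differentiableAt_fderiv_apply (hG : ContDiffAt 𝕜 2 G x) (v : E) :
    DifferentiableAt 𝕜 (fun y => fderiv 𝕜 G y v) x :=
  ((hG.fderiv_right (m := 1) le_rfl).differentiableAt one_ne_zero).clm_apply
    (differentiableAt_const v)

theorem ContDiffAt.fderiv_fderiv_apply (hG : ContDiffAt 𝕜 2 G x) (u v : E) :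
    fderiv 𝕜 (fun y => fderiv 𝕜 G y u) x v = fderiv 𝕜 (fderiv 𝕜 G) x v u := by
  rw [fderiv_clm_apply ((hG.fderiv_right (m := 1) le_rfl).differentiableAt one_ne_zero)
    (differentiableAt_const u)]
  simp

end SecondDerivative

section LogarithmicDerivative

open ContinuousLinearMap
open scoped Ring

variable (𝕜 : Type*) {E R : Type*} [RCLike 𝕜] [NormedAddCommGroup E] [NormedSpace 𝕜 E]
  [NormedRing R] [NormedAlgebra 𝕜 R]

noncomputable def rightLogDeriv (G : E → R) (u : E) (y : E) : R :=
  fderiv 𝕜 G y u * (G y)⁻¹ʳ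

noncomputable def leftLogDeriv (G : E → R) (v : E) (y : E) : R :=
  (G y)⁻¹ʳ * fderiv 𝕜 G y v

variable {𝕜} [HasSummableGeomSeries R] {G : E → R} {x : E}

theorem fderiv_ringInverse_comp_apply (hG : DifferentiableAt 𝕜 G x) (hx : IsUnit (G x)) (v : E) :
    fderiv 𝕜 (fun y => (G y)⁻¹ʳ) x v = -((G x)⁻¹ʳ * fderiv 𝕜 G x v * (G x)⁻¹ʳ) := by
  have h : HasFDerivAt (fun y => (G y)⁻¹ʳ) _ x :=
    (hasFDerivAt_ringInverse (𝕜 := 𝕜) hx.unit).comp x hG.hasFDerivAt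
  rw [h.fderiv, ← Ring.inverse_unit, hx.unit_spec]
  simp

theorem ContDiffAt.differentiableAt_rightLogDeriv (hG : ContDiffAt 𝕜 2 G x) (hx : IsUnit (G x))
    (u : E) : DifferentiableAt 𝕜 (rightLogDeriv 𝕜 G u) x :=
  (hG.differentiableAt_fderiv_apply u).mul ((hG.differentiableAt two_ne_zero).inverse hx)

theorem ContDiffAt.differentiableAt_leftLogDeriv (hG : ContDiffAt 𝕜 2 G x) (hx : IsUnit (G x))
    (v : E) : DifferentiableAt 𝕜 (leftLogDeriv 𝕜 G v) x :=
  ((hG.differentiableAt two_ne_zero).inverse hx).mul (hG.differentiableAt_fderiv_apply v)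

theorem fderiv_rightLogDeriv (hG : ContDiffAt 𝕜 2 G x) (hx : IsUnit (G x)) (u v : E) :
    fderiv 𝕜 (rightLogDeriv 𝕜 G u) x v =
      G x * fderiv 𝕜 (leftLogDeriv 𝕜 G v) x u * (G x)⁻¹ʳ := by
  have hG1 : DifferentiableAt 𝕜 G x := hG.differentiableAt two_ne_zero
  have hinv : DifferentiableAt 𝕜 (fun y => (G y)⁻¹ʳ) x := hG1.inverse hx
  unfold rightLogDeriv leftLogDeriv
  rw [fderiv_fun_mul' (hG.differentiableAt_fderiv_apply u) hinv,
    fderiv_fun_mul' hinv (hG.differentiableAt_fderiv_apply v)]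
  simp only [add_apply, smul_apply, smul_eq_mul, op_smul_eq_mul,
    fderiv_ringInverse_comp_apply hG1 hx, hG.fderiv_fderiv_apply,
    (hG.isSymmSndFDerivAt (by simp [minSmoothness_of_isRCLikeNormedField])).eq u v]
  have hGG : G x * (G x)⁻¹ʳ = 1 := Ring.mul_inverse_cancel _ hx
  simp only [mul_add, add_mul, mul_neg, neg_mul, ← mul_assoc, hGG, one_mul]
  abel

end LogarithmicDerivative

section MatrixCalculus

open Filter Topology Complex

-- Only the topology of the matrix space matters, so any norm would do.
attribute [local instance] Matrix.linftyOpNormedRing Matrix.linftyOpNormedAlgebra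

variable {n : ℕ} {Υ : ℝ → ℂ → Matrix (Fin n) (Fin n) ℂ} {D : Set ℝ} {s : Set ℂ} {z : ℂ}

theorem MSmoothOn2.contDiffOn (h : MSmoothOn2 n Υ D s) :
    ContDiffOn ℝ (⊤ : ℕ∞) (Function.uncurry Υ) (D ×ˢ s) :=
  (Matrix.ofLinearEquiv ℝ (m := Fin n) (n := Fin n) (α := ℂ)).toContinuousLinearEquiv.contDiff
    |>.comp_contDiffOn (contDiffOn_pi.2 fun i => contDiffOn_pi.2 fun j => h i j :)

theorem MSmoothOn2.eventually_contDiffAt {p : ℝ × ℂ}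
    (h : MSmoothOn2 n Υ D s) (hp : D ×ˢ s ∈ 𝓝 p) :
    ∀ᶠ q in 𝓝 p, ContDiffAt ℝ 2 (Function.uncurry Υ) q :=
  Eventually.eventually_nhds hp |>.mono fun _ hq =>
    (h.contDiffOn.contDiffAt hq).of_le (WithTop.coe_le_coe.2 le_top)

theorem mwDbar_eq_of_hasFDerivAt {f : ℂ → Matrix (Fin n) (Fin n) ℂ}
    {L : ℂ →L[ℝ] Matrix (Fin n) (Fin n) ℂ} (hf : HasFDerivAt f L z) :
    mwDbar n f z = (2⁻¹ : ℂ) • (L 1 + I • L I) := by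
  ext i j
  have hij : HasFDerivAt (fun w => f w i j)
      ((Matrix.entryLinearMap ℝ ℂ i j).toContinuousLinearMap.comp L) z :=
    (Matrix.entryLinearMap ℝ ℂ i j).toContinuousLinearMap.hasFDerivAt.comp z hf
  simp only [mwDbar, Matrix.of_apply, wDbar, hij.fderiv]
  simp

theorem mderiv0_eq_of_hasDerivAt {f : ℝ → Matrix (Fin n) (Fin n) ℂ}
    {m : Matrix (Fin n) (Fin n) ℂ} (hf : HasDerivAt f m 0) : mderiv0 n f = m := by
  ext i j
  exact ((Matrix.entryLinearMap ℝ ℂ i j).toContinuousLinearMap.hasFDerivAt.comp_hasDerivAt 0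
    hf).deriv

theorem mwDbar_eq_of_hasFDerivAt_prodMk {H : ℝ × ℂ → Matrix (Fin n) (Fin n) ℂ}
    {L : ℝ × ℂ →L[ℝ] Matrix (Fin n) (Fin n) ℂ} {f : ℂ → Matrix (Fin n) (Fin n) ℂ} {t : ℝ}
    (hH : HasFDerivAt H L (t, z)) (hf : f =ᶠ[𝓝 z] fun w => H (t, w)) :
    mwDbar n f z = (2⁻¹ : ℂ) • (L (0, 1) + I • L (0, I)) :=
  mwDbar_eq_of_hasFDerivAt ((hH.comp z (hasFDerivAt_prodMk_right t z)).congr_of_eventuallyEq hf)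

theorem mderiv0_eq_of_hasFDerivAt_prodMk {H : ℝ × ℂ → Matrix (Fin n) (Fin n) ℂ}
    {L : ℝ × ℂ →L[ℝ] Matrix (Fin n) (Fin n) ℂ} {f : ℝ → Matrix (Fin n) (Fin n) ℂ}
    (hH : HasFDerivAt H L (0, z)) (hf : f =ᶠ[𝓝 0] fun t => H (t, z)) :
    mderiv0 n f = L (1, 0) := by
  have h := (hH.comp (0 : ℝ) (hasFDerivAt_prodMk_left (0 : ℝ) z)).hasDerivAt
  exact mderiv0_eq_of_hasDerivAt (h.congr_of_eventuallyEq hf)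

theorem mwDbar_mderiv0_mul_inv
    (hΥ : ∀ᶠ p in 𝓝 ((0 : ℝ), z), ContDiffAt ℝ 2 (Function.uncurry Υ) p) (hz : IsUnit (Υ 0 z)) :
    mwDbar n (fun w => mderiv0 n (fun t => Υ t w) * (Υ 0 w)⁻¹) z =
      (2⁻¹ : ℂ) • (fderiv ℝ (rightLogDeriv ℝ (Function.uncurry Υ) (1, 0)) (0, z) (0, 1) +
        I • fderiv ℝ (rightLogDeriv ℝ (Function.uncurry Υ) (1, 0)) (0, z) (0, I)) := by
  refine mwDbar_eq_of_hasFDerivAt_prodMk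
    (hΥ.self_of_nhds.differentiableAt_rightLogDeriv hz _).hasFDerivAt ?_
  have hw : ∀ᶠ w in 𝓝 z, ContDiffAt ℝ 2 (Function.uncurry Υ) (0, w) :=
    (Continuous.prodMk_right (0 : ℝ)).tendsto z |>.eventually hΥ
  filter_upwards [hw] with w hw
  rw [mderiv0_eq_of_hasFDerivAt_prodMk (f := fun t => Υ t w)
    (hw.differentiableAt two_ne_zero).hasFDerivAt EventuallyEq.rfl,
    Matrix.nonsing_inv_eq_ringInverse]
  rfl

theorem mderiv0_inv_mul_mwDbar
    (hΥ : ∀ᶠ p in 𝓝 ((0 : ℝ), z), ContDiffAt ℝ 2 (Function.uncurry Υ) p) (hz : IsUnit (Υ 0 z)) :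
    mderiv0 n (fun t => (Υ t z)⁻¹ * mwDbar n (Υ t) z) =
      (2⁻¹ : ℂ) • (fderiv ℝ (leftLogDeriv ℝ (Function.uncurry Υ) (0, 1)) (0, z) (1, 0) +
        I • fderiv ℝ (leftLogDeriv ℝ (Function.uncurry Υ) (0, I)) (0, z) (1, 0)) := by
  have hd := hΥ.self_of_nhds.differentiableAt_leftLogDeriv hz
  have hH := ((hd (0, 1)).hasFDerivAt.add ((hd (0, I)).hasFDerivAt.const_smul I)).const_smul
    (2⁻¹ : ℂ)
  have ht : ∀ᶠ t in 𝓝 0, ContDiffAt ℝ 2 (Function.uncurry Υ) (t, z) :=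
    (Continuous.prodMk_left z).tendsto 0 |>.eventually hΥ
  refine mderiv0_eq_of_hasFDerivAt_prodMk hH ?_
  filter_upwards [ht] with t ht
  rw [mwDbar_eq_of_hasFDerivAt_prodMk (f := Υ t) (ht.differentiableAt two_ne_zero).hasFDerivAt
    EventuallyEq.rfl, Matrix.nonsing_inv_eq_ringInverse]
  simp only [Pi.smul_apply, Pi.add_apply, leftLogDeriv, mul_add, mul_smul_comm]
  rfl

theorem kodaira_spencer_coboundary_at (h : MSmoothOn2 n Υ D s)
    (hDs : D ×ˢ s ∈ 𝓝 ((0 : ℝ), z)) (hz : IsUnit (Υ 0 z)) :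
    mwDbar n (fun w => mderiv0 n (fun t => Υ t w) * (Υ 0 w)⁻¹) z
      = Υ 0 z * mderiv0 n (fun t => (Υ t z)⁻¹ * mwDbar n (Υ t) z) * (Υ 0 z)⁻¹ := by
  have hΥ := h.eventually_contDiffAt hDs
  have hswap (v : ℝ × ℂ) : fderiv ℝ (rightLogDeriv ℝ (Function.uncurry Υ) (1, 0)) (0, z) v =
      Υ 0 z * fderiv ℝ (leftLogDeriv ℝ (Function.uncurry Υ) v) (0, z) (1, 0) * (Υ 0 z)⁻¹ := by
    rw [Matrix.nonsing_inv_eq_ringInverse]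
    exact fderiv_rightLogDeriv hΥ.self_of_nhds hz (1, 0) v
  rw [mwDbar_mderiv0_mul_inv hΥ hz, mderiv0_inv_mul_mwDbar hΥ hz, hswap, hswap]
  simp only [mul_add, add_mul, mul_smul_comm, smul_mul_assoc]

end MatrixCalculus

/-- Kodaira–Spencer coboundary identity: for a smooth family
`Υ : D × ℍ → GL(n,ℂ)`,
`∂̄_z[(∂_tΥ)(0,z)·Υ(0,z)⁻¹] = Υ(0,z)·[∂_t|₀ (Υ(t,z)⁻¹·∂̄_zΥ(t,z))]·Υ(0,z)⁻¹`. -/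
theorem kodaira_spencer_coboundary (n : ℕ)
    (D : Set ℝ) (hD : D ∈ nhds (0 : ℝ))
    (Υ : ℝ → ℂ → Matrix (Fin n) (Fin n) ℂ)
    (hΥ_smooth : MSmoothOn2 n Υ D UHP)
    (hΥ_inv : ∀ t ∈ D, ∀ z ∈ UHP, IsUnit (Υ t z)) :
    ∀ z ∈ UHP,
      mwDbar n (fun w => mderiv0 n (fun t => Υ t w) * (Υ 0 w)⁻¹) z
        = Υ 0 z * mderiv0 n (fun t => (Υ t z)⁻¹ * mwDbar n (Υ t) z) * (Υ 0 z)⁻¹ := by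
  intro z hz
  have hUHP : UHP ∈ nhds z := (isOpen_lt continuous_const continuous_im).mem_nhds hz
  exact kodaira_spencer_coboundary_at hΥ_smooth (prod_mem_nhds hD hUHP)
    (hΥ_inv 0 (mem_of_mem_nhds hD) z hz)
end
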